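/- (Theorem 3.) Let d ≥ 1, p ∈ [1,∞] with conjugate exponent q, let w ∈ ℝ^d with w ≠ 0, b ∈ ℝ, ε > 0, and consider balanced Gaussian mixture data with means μ₊, μ₋ and σ > 0. Define the overall ℓp-adversarial rate p_{adv|p} = (1/2)·P_{N(μ₊,σ²I_d)}({x : w·x + b > 0 and there exists v with ‖v‖_p ≤ ε and w·(x+v) + b ≤ 0}) + (1/2)·P_{N(μ₋,σ²I_d)}({x : w·x + b ≤ 0 and there exists v with ‖v‖_p ≤ ε and w·(x+v) + b > 0}). Then p_{adv|p} = 1 − p_m − (1/2)[Φ((w·μ + b')/(‖w‖₂σ) − (‖w‖_q/‖w‖₂)(ε/σ)) + Φ((w·μ − b')/(‖w‖₂σ) − (‖w‖_q/‖w‖₂)(ε/σ))], where p_m = 1 − (1/2)[Φ((w·μ + b')/(‖w‖₂σ)) + Φ((w·μ − b')/(‖w‖₂σ))]. -/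

import Mathlib

open MeasureTheory ProbabilityTheory
open scoped ENNReal NNReal

/-- Euclidean inner product on `ℝ^d`. -/
noncomputable def dotp {d : ℕ} (w x : Fin d → ℝ) : ℝ := ∑ i, w i * x i

/-- The `ℓ₂` norm on `ℝ^d`. -/
noncomputable def l2 {d : ℕ} (w : Fin d → ℝ) : ℝ := Real.sqrt (∑ i, (w i)^2)

/-- The product Gaussian measure `N(m, σ²I_d)` on `ℝ^d`. -/
noncomputable def gaussPi {d : ℕ} (m : Fin d → ℝ) (σ : ℝ) : Measure (Fin d → ℝ) :=
  Measure.pi fun i => gaussianReal (m i) ((σ^2).toNNReal)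

/-- The standard normal cumulative distribution function `Φ`. -/
noncomputable def Phi (x : ℝ) : ℝ := ((gaussianReal 0 1) (Set.Iic x)).toReal

/-- The `ℓp` norm on `ℝ^d` for `p ∈ [1,∞]` (as an extended real exponent). -/
noncomputable def lpnorm {d : ℕ} (p : ℝ≥0∞) (v : Fin d → ℝ) : ℝ :=
  if p = ∞ then ⨆ i, |v i| else (∑ i, |v i| ^ p.toReal) ^ (1 / p.toReal)

/-- The `ℓp` norm on `ℝ^d` for a real exponent `p ∈ [1,∞)`. -/
noncomputable def lpR {d : ℕ} (p : ℝ) (v : Fin d → ℝ) : ℝ := (∑ i, |v i| ^ p) ^ (1/p)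

/-!
Each adversarial region is a slab orthogonal to `w`. By Hölder's inequality and its equality case,
`{w·v | ‖v‖_p ≤ ε} = [-ε‖w‖_q, ε‖w‖_q]`, so a correctly classified positive point can be pushed
across the boundary iff `0 < w·x + b ≤ ε‖w‖_q` (symmetrically for the negative class). Under
`N(m, σ²I_d)` the projection `w·x` is `N(w·m, ‖w‖₂²σ²)`, as the characteristic functions show, so
each slab has probability a difference of two values of `Φ`, and `Φ(-x) = 1 - Φ(x)` gives the
stated form.
-/

section Duality

variable {d : ℕ}

lemma dotp_comm (w v : Fin d → ℝ) : dotp w v = dotp v w := by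
  simp only [dotp, mul_comm]

lemma dotp_add_right (w x v : Fin d → ℝ) : dotp w (x + v) = dotp w x + dotp w v := by
  simp only [dotp, Pi.add_apply, mul_add, Finset.sum_add_distrib]

lemma dotp_sub_right (w x v : Fin d → ℝ) : dotp w (x - v) = dotp w x - dotp w v := by
  simp only [dotp, Pi.sub_apply, mul_sub, Finset.sum_sub_distrib]

lemma dotp_smul_right (w v : Fin d → ℝ) (c : ℝ) : dotp w (c • v) = c * dotp w v := by
  simp only [dotp, Pi.smul_apply, smul_eq_mul, Finset.mul_sum]
  exact Finset.sum_congr rfl fun i _ ↦ by ring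

lemma lpnorm_top (v : Fin d → ℝ) : lpnorm ∞ v = ⨆ i, |v i| := if_pos rfl

lemma lpnorm_one (v : Fin d → ℝ) : lpnorm 1 v = ∑ i, |v i| := by
  simp [lpnorm]

lemma lpnorm_of_ne_top {p : ℝ≥0∞} (hp : p ≠ ∞) (v : Fin d → ℝ) : lpnorm p v = lpR p.toReal v :=
  if_neg hp

lemma lpnorm_eq_norm_toLp {p : ℝ≥0∞} (hp : p ≠ 0) (v : Fin d → ℝ) :
    lpnorm p v = ‖WithLp.toLp p v‖ := by
  rcases eq_or_ne p ∞ with rfl | hp_top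
  · rw [lpnorm_top, PiLp.norm_eq_ciSup]
    rfl
  · rw [lpnorm_of_ne_top hp_top, PiLp.norm_eq_sum (ENNReal.toReal_pos hp hp_top)]
    rfl

lemma lpnorm_nonneg (p : ℝ≥0∞) [Fact (1 ≤ p)] (v : Fin d → ℝ) : 0 ≤ lpnorm p v := by
  rw [lpnorm_eq_norm_toLp (one_pos.trans_le Fact.out).ne']
  exact norm_nonneg _

lemma lpnorm_smul (p : ℝ≥0∞) [Fact (1 ≤ p)] (c : ℝ) (v : Fin d → ℝ) :
    lpnorm p (c • v) = |c| * lpnorm p v := by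
  simp only [lpnorm_eq_norm_toLp (one_pos.trans_le Fact.out).ne', WithLp.toLp_smul, norm_smul,
    Real.norm_eq_abs]

lemma lpR_pos (q : ℝ) {w : Fin d → ℝ} (hw : w ≠ 0) : 0 < lpR q w := by
  obtain ⟨j, hj⟩ := Function.ne_iff.mp hw
  have hsum : 0 < ∑ i, |w i| ^ q := Finset.sum_pos' (fun i _ ↦ by positivity)
    ⟨j, Finset.mem_univ j, Real.rpow_pos_of_pos (abs_pos.mpr hj) q⟩
  exact Real.rpow_pos_of_pos hsum _

lemma abs_sign_le_one (x : ℝ) : |(SignType.sign x : ℝ)| ≤ 1 := by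
  rcases lt_trichotomy x 0 with h | h | h <;> simp [sign_neg, sign_pos, h]

lemma abs_dotp_le_lpR_mul_lpR {p q : ℝ} (hpq : p.HolderConjugate q) (w v : Fin d → ℝ) :
    |dotp w v| ≤ lpR p v * lpR q w :=
  calc |dotp w v| ≤ ∑ i, |v i| * |w i| := by
        simpa only [dotp, abs_mul, mul_comm] using
          Finset.abs_sum_le_sum_abs (fun i ↦ w i * v i) Finset.univ
    _ ≤ lpR p v * lpR q w := by
        simpa only [lpR, abs_abs] using Real.inner_le_Lp_mul_Lq Finset.univ (fun i ↦ |v i|)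
          (fun i ↦ |w i|) hpq

lemma abs_dotp_le_lpnorm_top_mul_lpnorm_one (w v : Fin d → ℝ) :
    |dotp w v| ≤ lpnorm ∞ v * lpnorm 1 w := by
  rw [lpnorm_top, lpnorm_one, Finset.mul_sum]
  refine (Finset.abs_sum_le_sum_abs _ _).trans (Finset.sum_le_sum fun i _ ↦ ?_)
  rw [abs_mul, mul_comm]
  exact mul_le_mul_of_nonneg_right
    (le_ciSup (f := fun j ↦ |v j|) (Set.finite_range _).bddAbove i) (abs_nonneg _)

theorem abs_dotp_le_lpnorm_mul_lpnorm {p q : ℝ≥0∞} [p.HolderConjugate q] (w v : Fin d → ℝ) :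
    |dotp w v| ≤ lpnorm p v * lpnorm q w := by
  rcases eq_or_ne p ∞ with rfl | hp
  · obtain rfl : q = 1 := (ENNReal.HolderConjugate.eq_top_iff_eq_one ∞ q).mp rfl
    exact abs_dotp_le_lpnorm_top_mul_lpnorm_one w v
  rcases eq_or_ne q ∞ with rfl | hq
  · obtain rfl : p = 1 := (ENNReal.HolderConjugate.eq_top_iff_eq_one ∞ p).mp rfl
    rw [dotp_comm, mul_comm]
    exact abs_dotp_le_lpnorm_top_mul_lpnorm_one v w
  rw [lpnorm_of_ne_top hp, lpnorm_of_ne_top hq]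
  exact abs_dotp_le_lpR_mul_lpR (ENNReal.HolderConjugate.toReal_of_ne_top hp hq) w v

lemma exists_lpR_eq_one_dotp_eq {p q : ℝ} (hpq : p.HolderConjugate q) {w : Fin d → ℝ}
    (hw : w ≠ 0) : ∃ v, lpR p v = 1 ∧ dotp w v = lpR q w := by
  set N := lpR q w with hN_def
  have hN : 0 < N := lpR_pos q hw
  set u : Fin d → ℝ := fun i ↦ |w i| / N
  have hu (i : Fin d) : 0 ≤ u i := by positivity
  have hu_sum : ∑ i, u i ^ q = 1 := by
    have hNq : N ^ q = ∑ i, |w i| ^ q := by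
      rw [hN_def, lpR, one_div, Real.rpow_inv_rpow (by positivity) hpq.symm.ne_zero]
    simp only [u, Real.div_rpow (abs_nonneg _) hN.le, ← Finset.sum_div, ← hNq,
      div_self (Real.rpow_pos_of_pos hN q).ne']
  have hu_mul (i : Fin d) : u i * u i ^ (q - 1) = u i ^ q := by
    rw [← Real.rpow_one_add' (hu i) (by linarith [hpq.symm.lt]), add_sub_cancel]
  have hsign (i : Fin d) : |SignType.sign (w i) * u i ^ (q - 1)| = u i ^ (q - 1) := by
    rcases eq_or_ne (w i) 0 with h | h
    · simp [u, h, Real.zero_rpow hpq.symm.sub_one_ne_zero]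
    · rw [abs_mul, abs_of_nonneg (Real.rpow_nonneg (hu i) _)]
      rcases h.lt_or_gt with h | h <;> simp [h]
  refine ⟨fun i ↦ SignType.sign (w i) * u i ^ (q - 1), ?_, ?_⟩
  · have habs (i : Fin d) : |SignType.sign (w i) * u i ^ (q - 1)| ^ p = u i ^ q := by
      rw [hsign, ← Real.rpow_mul (hu i), hpq.symm.sub_one_mul_conj]
    rw [lpR]
    simp only [habs, hu_sum, Real.one_rpow]
  · have hterm (i : Fin d) : w i * (SignType.sign (w i) * u i ^ (q - 1)) = N * u i ^ q := by
      rw [← mul_assoc, self_mul_sign, ← hu_mul, ← mul_assoc, mul_div_cancel₀ _ hN.ne']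
    simp only [dotp, hterm, ← Finset.mul_sum, hu_sum, mul_one]

lemma exists_lpnorm_top_le_one_dotp_eq (w : Fin d → ℝ) :
    ∃ v, lpnorm ∞ v ≤ 1 ∧ dotp w v = lpnorm 1 w :=
  ⟨fun i ↦ SignType.sign (w i), by
    rw [lpnorm_top]; exact Real.iSup_le (fun i ↦ abs_sign_le_one _) zero_le_one, by
    simp only [dotp, lpnorm_one, self_mul_sign]⟩

lemma exists_lpnorm_one_le_one_dotp_eq {w : Fin d → ℝ} (hw : w ≠ 0) :
    ∃ v, lpnorm 1 v ≤ 1 ∧ dotp w v = lpnorm ∞ w := by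
  obtain ⟨j₀, -⟩ := Function.ne_iff.mp hw
  obtain ⟨j, -, hj⟩ := Finset.exists_max_image Finset.univ (fun i ↦ |w i|) ⟨j₀, Finset.mem_univ _⟩
  refine ⟨Pi.single j (SignType.sign (w j)), ?_, ?_⟩
  · rw [lpnorm_one, Finset.sum_eq_single_of_mem j (Finset.mem_univ j)
      fun i _ hi ↦ by simp [hi], Pi.single_eq_same]
    exact abs_sign_le_one _
  · have : Nonempty (Fin d) := ⟨j⟩
    rw [lpnorm_top, dotp, Finset.sum_eq_single_of_mem j (Finset.mem_univ j)
      fun i _ hi ↦ by simp [hi], Pi.single_eq_same, self_mul_sign]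
    exact le_antisymm (le_ciSup (f := fun i ↦ |w i|) (Set.finite_range _).bddAbove j)
      (ciSup_le fun i ↦ hj i (Finset.mem_univ i))

theorem exists_lpnorm_le_one_dotp_eq {p q : ℝ≥0∞} [p.HolderConjugate q] {w : Fin d → ℝ}
    (hw : w ≠ 0) : ∃ v, lpnorm p v ≤ 1 ∧ dotp w v = lpnorm q w := by
  rcases eq_or_ne p ∞ with rfl | hp
  · obtain rfl : q = 1 := (ENNReal.HolderConjugate.eq_top_iff_eq_one ∞ q).mp rfl
    exact exists_lpnorm_top_le_one_dotp_eq w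
  rcases eq_or_ne q ∞ with rfl | hq
  · obtain rfl : p = 1 := (ENNReal.HolderConjugate.eq_top_iff_eq_one ∞ p).mp rfl
    exact exists_lpnorm_one_le_one_dotp_eq hw
  simp only [lpnorm_of_ne_top hp, lpnorm_of_ne_top hq]
  obtain ⟨v, hv, hwv⟩ :=
    exists_lpR_eq_one_dotp_eq (ENNReal.HolderConjugate.toReal_of_ne_top hp hq) hw
  exact ⟨v, hv.le, hwv⟩

variable {p q : ℝ≥0∞} [p.HolderConjugate q] {w : Fin d → ℝ} {ε : ℝ}

theorem exists_lpnorm_le_dotp_le_iff (hw : w ≠ 0) (hε : 0 ≤ ε) (t : ℝ) :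
    (∃ v, lpnorm p v ≤ ε ∧ dotp w v ≤ t) ↔ -(ε * lpnorm q w) ≤ t := by
  have : Fact (1 ≤ p) := ⟨ENNReal.HolderConjugate.one_le p q⟩
  have : Fact (1 ≤ q) := ⟨ENNReal.HolderConjugate.one_le q p⟩
  constructor
  · rintro ⟨v, hv, hwv⟩
    have := neg_le_of_abs_le (abs_dotp_le_lpnorm_mul_lpnorm (p := p) (q := q) w v)
    nlinarith [lpnorm_nonneg q w]
  · intro ht
    obtain ⟨v, hv, hwv⟩ := exists_lpnorm_le_one_dotp_eq (p := p) (q := q) hw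
    refine ⟨(-ε) • v, ?_, ?_⟩
    · rw [lpnorm_smul, abs_neg, abs_of_nonneg hε]
      exact mul_le_of_le_one_right hε hv
    · rwa [dotp_smul_right, hwv, neg_mul]

theorem exists_lpnorm_le_lt_dotp_iff (hw : w ≠ 0) (hε : 0 ≤ ε) (t : ℝ) :
    (∃ v, lpnorm p v ≤ ε ∧ t < dotp w v) ↔ t < ε * lpnorm q w := by
  have : Fact (1 ≤ p) := ⟨ENNReal.HolderConjugate.one_le p q⟩
  have : Fact (1 ≤ q) := ⟨ENNReal.HolderConjugate.one_le q p⟩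
  constructor
  · rintro ⟨v, hv, hwv⟩
    have := le_of_abs_le (abs_dotp_le_lpnorm_mul_lpnorm (p := p) (q := q) w v)
    nlinarith [lpnorm_nonneg q w]
  · intro ht
    obtain ⟨v, hv, hwv⟩ := exists_lpnorm_le_one_dotp_eq (p := p) (q := q) hw
    refine ⟨ε • v, ?_, ?_⟩
    · rw [lpnorm_smul, abs_of_nonneg hε]
      exact mul_le_of_le_one_right hε hv
    · rwa [dotp_smul_right, hwv]

end Duality

section Gaussian

open Complex in
theorem map_sum_mul_pi_gaussianReal {ι : Type*} [Fintype ι] (w m : ι → ℝ) (v : ι → ℝ≥0) :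
    (Measure.pi fun i ↦ gaussianReal (m i) (v i)).map (fun x ↦ ∑ i, w i * x i)
      = gaussianReal (∑ i, w i * m i) (∑ i, ‖w i‖₊ ^ 2 * v i) := by
  refine Measure.ext_of_charFun (funext fun t ↦ ?_)
  have hexp (x : ι → ℝ) :
      cexp (t * (∑ i, w i * x i : ℝ) * I) = ∏ i, cexp ((t * w i : ℝ) * x i * I) := by
    rw [← Complex.exp_sum, ofReal_sum, Finset.mul_sum, Finset.sum_mul]
    exact congrArg cexp (Finset.sum_congr rfl fun i _ ↦ by push_cast; ring)
  rw [charFun_apply_real, integral_map (Finset.measurable_sum _ fun i _ ↦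
    (measurable_pi_apply i).const_mul _).aemeasurable (by fun_prop)]
  simp_rw [hexp]
  rw [integral_fintype_prod_eq_prod (f := fun i (y : ℝ) ↦ cexp ((t * w i : ℝ) * y * I))]
  simp_rw [← charFun_apply_real, charFun_gaussianReal, ← Complex.exp_sum]
  simp only [NNReal.coe_sum, NNReal.coe_mul, NNReal.coe_pow, coe_nnnorm, Real.norm_eq_abs, sq_abs]
  push_cast
  rw [Finset.mul_sum, Finset.sum_mul, Finset.sum_mul, Finset.sum_div, ← Finset.sum_sub_distrib]
  exact congrArg cexp (Finset.sum_congr rfl fun i _ ↦ by ring)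

lemma map_dotp_gaussPi {d : ℕ} (w m : Fin d → ℝ) (σ : ℝ) :
    (gaussPi m σ).map (dotp w) = gaussianReal (dotp w m) ((l2 w * σ) ^ 2).toNNReal := by
  rw [gaussPi, dotp]
  refine (map_sum_mul_pi_gaussianReal w m _).trans (congrArg _ (NNReal.eq ?_))
  rw [Real.coe_toNNReal _ (sq_nonneg _), mul_pow, l2, Real.sq_sqrt (by positivity), Finset.sum_mul]
  simp [Real.norm_eq_abs, sq_abs, Real.coe_toNNReal _ (sq_nonneg σ)]

lemma map_mul_add_gaussianReal_zero_one (M : ℝ) {s : ℝ} :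
    (gaussianReal 0 1).map (fun x ↦ s * x + M) = gaussianReal M (s ^ 2).toNNReal := by
  rw [show (fun x ↦ s * x + M) = (· + M) ∘ (s * ·) from rfl,
    ← Measure.map_map (measurable_add_const M) (measurable_const_mul s),
    gaussianReal_map_const_mul, gaussianReal_map_add_const, mul_zero, zero_add, mul_one]
  congr
  exact (max_eq_left (sq_nonneg s)).symm

lemma gaussianReal_real_Iic (M : ℝ) {s : ℝ} (hs : 0 < s) (t : ℝ) :
    (gaussianReal M (s ^ 2).toNNReal).real (Set.Iic t) = Phi ((t - M) / s) := by
  rw [← map_mul_add_gaussianReal_zero_one M, map_measureReal_apply (by fun_prop)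
    measurableSet_Iic, Phi, measureReal_def]
  congr 2
  ext x
  simp [le_div_iff₀ hs, mul_comm, le_sub_iff_add_le]

lemma gaussianReal_real_Ioc (M : ℝ) {s : ℝ} (hs : 0 < s) {a b : ℝ} (hab : a ≤ b) :
    (gaussianReal M (s ^ 2).toNNReal).real (Set.Ioc a b)
      = Phi ((b - M) / s) - Phi ((a - M) / s) := by
  rw [← Set.Iic_sdiff_Iic, measureReal_sdiff (Set.Iic_subset_Iic.mpr hab) measurableSet_Iic,
    gaussianReal_real_Iic M hs, gaussianReal_real_Iic M hs]

lemma Phi_neg (x : ℝ) : Phi (-x) = 1 - Phi x := by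
  have := nullSingletonClass_gaussianReal (μ := 0) one_ne_zero
  have hsymm := gaussianReal_map_neg (μ := 0) (v := 1)
  rw [neg_zero] at hsymm
  rw [Phi, Phi, ← measureReal_def, ← measureReal_def, ← probReal_compl_eq_one_sub measurableSet_Iic,
    Set.compl_Iic, measureReal_congr Ioi_ae_eq_Ici]
  conv_lhs => rw [← hsymm, map_measureReal_apply (by fun_prop) measurableSet_Iic]
  simp [Set.preimage, Set.Ici]

end Gaussian

section Rate
variable {d : ℕ}

lemma l2_pos {w : Fin d → ℝ} (hw : w ≠ 0) : 0 < l2 w := by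
  obtain ⟨j, hj⟩ := Function.ne_iff.mp hw
  exact Real.sqrt_pos.mpr
    (Finset.sum_pos' (fun i _ ↦ sq_nonneg _) ⟨j, Finset.mem_univ j, pow_two_pos_of_ne_zero hj⟩)

lemma measurable_dotp (w : Fin d → ℝ) : Measurable (dotp w) :=
  Finset.measurable_sum _ fun i _ ↦ (measurable_pi_apply i).const_mul _

lemma gaussPi_real_dotp_preimage_Ioc {w : Fin d → ℝ} (hw : w ≠ 0) (m : Fin d → ℝ) {σ : ℝ}
    (hσ : 0 < σ) {a b : ℝ} (hab : a ≤ b) :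
    (gaussPi m σ).real (dotp w ⁻¹' Set.Ioc a b)
      = Phi ((b - dotp w m) / (l2 w * σ)) - Phi ((a - dotp w m) / (l2 w * σ)) := by
  rw [← map_measureReal_apply (measurable_dotp w) measurableSet_Ioc, map_dotp_gaussPi,
    gaussianReal_real_Ioc _ (mul_pos (l2_pos hw) hσ) hab]

variable {p q : ℝ≥0∞} [p.HolderConjugate q] {w : Fin d → ℝ} {ε : ℝ}

lemma setOf_pos_and_exists_flip_eq_preimage_Ioc (hw : w ≠ 0) (hε : 0 ≤ ε) (b : ℝ) :
    {x : Fin d → ℝ | 0 < dotp w x + b ∧ ∃ v, lpnorm p v ≤ ε ∧ dotp w (x + v) + b ≤ 0}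
      = dotp w ⁻¹' Set.Ioc (-b) (ε * lpnorm q w - b) := by
  ext x
  have hflip : (∃ v, lpnorm p v ≤ ε ∧ dotp w (x + v) + b ≤ 0)
      ↔ ∃ v, lpnorm p v ≤ ε ∧ dotp w v ≤ -(dotp w x + b) :=
    exists_congr fun v ↦ and_congr_right' <| by
      rw [dotp_add_right]; constructor <;> intro <;> linarith
  simp only [Set.mem_ofPred_eq, Set.mem_preimage, Set.mem_Ioc, hflip,
    exists_lpnorm_le_dotp_le_iff (q := q) hw hε]
  constructor <;> rintro ⟨h₁, h₂⟩ <;> constructor <;> linarith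

lemma setOf_nonpos_and_exists_flip_eq_preimage_Ioc (hw : w ≠ 0) (hε : 0 ≤ ε) (b : ℝ) :
    {x : Fin d → ℝ | dotp w x + b ≤ 0 ∧ ∃ v, lpnorm p v ≤ ε ∧ 0 < dotp w (x + v) + b}
      = dotp w ⁻¹' Set.Ioc (-(ε * lpnorm q w) - b) (-b) := by
  ext x
  have hflip : (∃ v, lpnorm p v ≤ ε ∧ 0 < dotp w (x + v) + b)
      ↔ ∃ v, lpnorm p v ≤ ε ∧ -(dotp w x + b) < dotp w v :=
    exists_congr fun v ↦ and_congr_right' <| by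
      rw [dotp_add_right]; constructor <;> intro <;> linarith
  simp only [Set.mem_ofPred_eq, Set.mem_preimage, Set.mem_Ioc, hflip,
    exists_lpnorm_le_lt_dotp_iff (q := q) hw hε]
  constructor <;> rintro ⟨h₁, h₂⟩ <;> constructor <;> linarith

end Rate

theorem lp_adversarial_rate_general {d : ℕ}
    (p q : ℝ≥0∞) (hpq : 1/p + 1/q = 1)
    (w : Fin d → ℝ) (hw : w ≠ 0) (b ε : ℝ) (hε : 0 < ε)
    (μp μm : Fin d → ℝ) (σ : ℝ) (hσ : 0 < σ)
    (μ μbar : Fin d → ℝ) (b' : ℝ)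
    (hμ : μ = (1/2 : ℝ) • (μp - μm)) (hμbar : μbar = (1/2 : ℝ) • (μp + μm))
    (hb' : b' = dotp w μbar + b)
    (padv pm : ℝ)
    (hpadv : padv =
        (1/2) * ((gaussPi μp σ) {x : Fin d → ℝ | 0 < dotp w x + b ∧
            ∃ v : Fin d → ℝ, lpnorm p v ≤ ε ∧ dotp w (x + v) + b ≤ 0}).toReal
      + (1/2) * ((gaussPi μm σ) {x : Fin d → ℝ | dotp w x + b ≤ 0 ∧
            ∃ v : Fin d → ℝ, lpnorm p v ≤ ε ∧ 0 < dotp w (x + v) + b}).toReal)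
    (hpm : pm = 1 - (1/2) * (Phi ((dotp w μ + b') / (l2 w * σ)) +
                              Phi ((dotp w μ - b') / (l2 w * σ)))) :
    padv = 1 - pm - (1/2) *
        (Phi ((dotp w μ + b') / (l2 w * σ) - (lpnorm q w / l2 w) * (ε / σ)) +
         Phi ((dotp w μ - b') / (l2 w * σ) - (lpnorm q w / l2 w) * (ε / σ))) := by
  have : p.HolderConjugate q := ⟨by simpa only [one_div, inv_one] using hpq⟩
  have : Fact (1 ≤ q) := ⟨ENNReal.HolderConjugate.one_le q p⟩
  rw [setOf_pos_and_exists_flip_eq_preimage_Ioc (q := q) hw hε.le,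
    setOf_nonpos_and_exists_flip_eq_preimage_Ioc (q := q) hw hε.le] at hpadv
  set c := ε * lpnorm q w
  set s := l2 w * σ
  have hc : 0 ≤ c := mul_nonneg hε.le (lpnorm_nonneg q w)
  rw [← measureReal_def, ← measureReal_def,
    gaussPi_real_dotp_preimage_Ioc hw _ hσ (by linarith : -b ≤ c - b),
    gaussPi_real_dotp_preimage_Ioc hw _ hσ (by linarith : -c - b ≤ -b)] at hpadv
  have hμp : dotp w μp = dotp w μbar + dotp w μ := by
    rw [← dotp_add_right, hμ, hμbar]; congr 1; module
  have hμm : dotp w μm = dotp w μbar - dotp w μ := by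
    rw [← dotp_sub_right, hμ, hμbar]; congr 1; module
  rw [show (c - b - dotp w μp) / s = -((dotp w μ + b') / s - c / s) by rw [hμp, hb']; ring,
    show (-b - dotp w μp) / s = -((dotp w μ + b') / s) by rw [hμp, hb']; ring,
    show (-b - dotp w μm) / s = (dotp w μ - b') / s by rw [hμm, hb']; ring,
    show (-c - b - dotp w μm) / s = (dotp w μ - b') / s - c / s by rw [hμm, hb']; ring,
    Phi_neg, Phi_neg] at hpadv
  rw [hpadv, hpm,
    show lpnorm q w / l2 w * (ε / σ) = c / s by rw [div_mul_div_comm, mul_comm (lpnorm q w)]]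
  ring

/-- Theorem 3: the overall `ℓp`-adversarial rate of a linear
classifier for balanced Gaussian mixture data. -/
theorem lp_adversarial_rate {d : ℕ} (hd : 1 ≤ d)
    (p q : ℝ≥0∞) (hp : 1 ≤ p) (hpq : 1/p + 1/q = 1)
    (w : Fin d → ℝ) (hw : w ≠ 0) (b ε : ℝ) (hε : 0 < ε)
    (μp μm : Fin d → ℝ) (σ : ℝ) (hσ : 0 < σ)
    (μ μbar : Fin d → ℝ) (b' : ℝ)
    (hμ : μ = (1/2 : ℝ) • (μp - μm)) (hμbar : μbar = (1/2 : ℝ) • (μp + μm))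
    (hb' : b' = dotp w μbar + b)
    (padv pm : ℝ)
    (hpadv : padv =
        (1/2) * ((gaussPi μp σ) {x : Fin d → ℝ | 0 < dotp w x + b ∧
            ∃ v : Fin d → ℝ, lpnorm p v ≤ ε ∧ dotp w (x + v) + b ≤ 0}).toReal
      + (1/2) * ((gaussPi μm σ) {x : Fin d → ℝ | dotp w x + b ≤ 0 ∧
            ∃ v : Fin d → ℝ, lpnorm p v ≤ ε ∧ 0 < dotp w (x + v) + b}).toReal)
    (hpm : pm = 1 - (1/2) * (Phi ((dotp w μ + b') / (l2 w * σ)) +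
                              Phi ((dotp w μ - b') / (l2 w * σ)))) :
    padv = 1 - pm - (1/2) *
        (Phi ((dotp w μ + b') / (l2 w * σ) - (lpnorm q w / l2 w) * (ε / σ)) +
         Phi ((dotp w μ - b') / (l2 w * σ) - (lpnorm q w / l2 w) * (ε / σ))) :=
  lp_adversarial_rate_general p q hpq w hw b ε hε μp μm σ hσ μ μbar b' hμ hμbar hb' padv pm hpadv
    hpm
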